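/- arXiv:1810.00269 — 8 statements merged into one kernel-verified Lean document; each statement's English description precedes it below -/
import Mathlib

section
/- Let w : (0, +∞) → ℝ be a function that is differentiable with continuous derivative on (0, δ) for some δ > 0, such that the stability condition (i) holds at every point a ∈ (0, δ) at which w(a) ≠ 0, and such that w(a) ≥ −1 for all a > 0. Then w(t) ≥ 0 for all t ∈ (0, δ). -/
/-!
Where `w a < 0`, multiplying the stability condition by `w a` turns it into the Riccati inequality
`w' ≥ 3 w² / a`. In particular `w` is increasing wherever it is negative, so once `w t < 0` it
stays negative on all of `(0, t]`. There `1 / w + 3 log a` is antitone, so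
`3 log a > 1 / w a + 3 log a ≥ 1 / w t + 3 log t` for every `a ∈ (0, t]`, which fails as `a → 0`.
-/

open Set

lemma div_le_div_sq_of_stability {x a d : ℝ} (ha : 0 < a) (hx : x < 0)
    (h : 0 ≤ x - 1 / 3 * a * d / x) : 3 / a ≤ d / x ^ 2 := by
  have hmul : (x - 1 / 3 * a * d / x) * x ≤ 0 := mul_nonpos_of_nonneg_of_nonpos h hx.le
  rw [sub_mul, div_mul_cancel₀ _ hx.ne] at hmul
  rw [div_le_div_iff₀ ha (sq_pos_of_neg hx)]
  linarith

lemma neg_of_neg_of_deriv_pos_of_neg {f : ℝ → ℝ} {b t : ℝ} (hbt : b ≤ t)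
    (hf : ∀ x ∈ Icc b t, DifferentiableAt ℝ f x)
    (hderiv : ∀ x ∈ Icc b t, f x < 0 → 0 < deriv f x) (ht : f t < 0) : f b < 0 := by
  by_contra! hb
  have hcont : ContinuousOn f (Icc b t) := fun x hx => (hf x hx).continuousAt.continuousWithinAt
  set S := Icc b t ∩ f ⁻¹' Ici 0
  have hS : IsCompact S :=
    isCompact_Icc.of_isClosed_subset (hcont.preimage_isClosed_of_isClosed isClosed_Icc isClosed_Ici)
      inter_subset_left
  obtain ⟨c, ⟨⟨hbc, hct⟩, hc⟩, hc_max⟩ := hS.exists_isGreatest ⟨b, ⟨le_rfl, hbt⟩, hb⟩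
  have hneg_after : ∀ x ∈ Ioc c t, f x < 0 := fun x hx => by
    by_contra! hx0
    exact hx.1.not_ge (hc_max ⟨⟨hbc.trans hx.1.le, hx.2⟩, hx0⟩)
  have hct' : c < t := hct.lt_of_ne (by rintro rfl; exact (ht.trans_le hc).false)
  have hmono : StrictMonoOn f (Icc c t) := by
    refine strictMonoOn_of_deriv_pos (convex_Icc c t) (hcont.mono (Icc_subset_Icc_left hbc)) ?_
    rw [interior_Icc]
    exact fun x hx => hderiv x ⟨hbc.trans hx.1.le, hx.2.le⟩ (hneg_after x (Ioo_subset_Ioc_self hx))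
  have hc0 : 0 ≤ f c := hc
  linarith [hmono (left_mem_Icc.2 hct) (right_mem_Icc.2 hct) hct']

lemma exists_nonneg_of_riccati {f : ℝ → ℝ} {k t : ℝ} (hk : 0 < k) (ht : 0 < t)
    (hf : ∀ a ∈ Ioc 0 t, DifferentiableAt ℝ f a)
    (hric : ∀ a ∈ Ioc 0 t, f a < 0 → k / a ≤ deriv f a / f a ^ 2) :
    ∃ a ∈ Ioc 0 t, 0 ≤ f a := by
  by_contra! hneg
  set u : ℝ → ℝ := fun a => (f a)⁻¹ + k * Real.log a
  have hu : ∀ a ∈ Ioc 0 t, HasDerivAt u (-(deriv f a / f a ^ 2) + k / a) a := fun a ha => by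
    have h := ((hf a ha).hasDerivAt.inv (hneg a ha).ne).add
      ((Real.hasDerivAt_log ha.1.ne').const_mul k)
    rwa [neg_div, ← div_eq_mul_inv] at h
  have hanti : AntitoneOn u (Ioc 0 t) := by
    refine antitoneOn_of_deriv_nonpos (convex_Ioc 0 t)
      (fun a ha => (hu a ha).continuousAt.continuousWithinAt) ?_ ?_ <;> rw [interior_Ioc]
    · exact fun a ha => (hu a (Ioo_subset_Ioc_self ha)).differentiableAt.differentiableWithinAt
    · intro a ha
      have ha' := Ioo_subset_Ioc_self ha
      rw [(hu a ha').deriv]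
      linarith [hric a ha' (hneg a ha')]
  set s := min t (Real.exp (u t / k))
  have hs : s ∈ Ioc 0 t := ⟨lt_min ht (Real.exp_pos _), min_le_left _ _⟩
  have hlog : k * Real.log s ≤ u t := by
    have := Real.log_le_log hs.1 (min_le_right t (Real.exp (u t / k)))
    rw [Real.log_exp, le_div_iff₀ hk] at this
    linarith
  have hus : u t ≤ u s := hanti hs ⟨ht, le_rfl⟩ hs.2
  have hinv : (f s)⁻¹ < 0 := inv_lt_zero.2 (hneg s hs)
  simp only [u] at hus hlog
  linarith

theorem stmt_1_general (w : ℝ → ℝ) (δ : ℝ)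
    (hdiff : ∀ t ∈ Set.Ioo (0 : ℝ) δ, DifferentiableAt ℝ w t)
    (hstab : ∀ a ∈ Set.Ioo (0 : ℝ) δ, w a ≠ 0 →
      w a - (1 / 3) * a * deriv w a / w a ≥ 0) :
    ∀ t ∈ Set.Ioo (0 : ℝ) δ, w t ≥ 0 := by
  rintro t ⟨ht0, htδ⟩
  by_contra! hwt
  have hsub : Ioc 0 t ⊆ Ioo 0 δ := Ioc_subset_Ioo_right htδ
  have hric : ∀ a ∈ Ioo 0 δ, w a < 0 → 3 / a ≤ deriv w a / w a ^ 2 := fun a ha hwa =>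
    div_le_div_sq_of_stability ha.1 hwa (hstab a ha hwa.ne)
  have hneg : ∀ b ∈ Ioc 0 t, w b < 0 := fun b hb => by
    have hIcc : Icc b t ⊆ Ioo 0 δ := fun x hx => hsub ⟨hb.1.trans_le hx.1, hx.2⟩
    refine neg_of_neg_of_deriv_pos_of_neg hb.2 (fun x hx => hdiff x (hIcc hx)) (fun x hx hwx => ?_) hwt
    have := (hric x (hIcc hx) hwx).trans_lt' (div_pos three_pos (hIcc hx).1)
    exact (div_pos_iff_of_pos_right (sq_pos_of_neg hwx)).1 this
  obtain ⟨a, ha, hwa⟩ := exists_nonneg_of_riccati three_pos ht0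
    (fun a ha => hdiff a (hsub ha)) (fun a ha => hric a (hsub ha))
  exact (hneg a ha).not_ge hwa

/-- If `w` is differentiable with continuous derivative on `(0, δ)`,
satisfies the stability condition on `(0, δ)` wherever `w a ≠ 0`, and `w a ≥ -1`
for all `a > 0`, then `w t ≥ 0` for all `t ∈ (0, δ)`. -/
theorem stmt_1 (w : ℝ → ℝ) (δ : ℝ) (hδ : 0 < δ)
    (hdiff : ∀ t ∈ Set.Ioo (0 : ℝ) δ, DifferentiableAt ℝ w t)
    (hderiv_cont : ContinuousOn (deriv w) (Set.Ioo (0 : ℝ) δ))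
    (hstab : ∀ a ∈ Set.Ioo (0 : ℝ) δ, w a ≠ 0 →
      w a - (1 / 3) * a * deriv w a / w a ≥ 0)
    (hbound : ∀ a > (0 : ℝ), w a ≥ -1) :
    ∀ t ∈ Set.Ioo (0 : ℝ) δ, w t ≥ 0 :=
  stmt_1_general w δ hdiff hstab
end

section
/- Let w : (0, +∞) → ℝ be differentiable with continuous derivative on (0, δ) for some 0 < δ < 1, suppose the set { t ∈ (0, 1) : w is not differentiable at t } is finite, the stability condition (i) holds at every point a at which w is differentiable and w(a) ≠ 0, w(a) ≥ −1 for all a > 0, and w(a) → w₀ as a → 1 for some w₀ with −1 ≤ w₀ < 0. Then w is discontinuous at some point t ∈ (0, 1). -/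
/-!
Wherever `w < 0`, the stability condition reads `w' ≥ 3 w² / a`, i.e. `g a = 1 / w a + 3 log a`
is nonincreasing (continuity of `w` bridges the finitely many points where it is not
differentiable). As `g → 1 / w₀` at `1`, every interval `(c, 1)` on which `w < 0` satisfies
`1 / w a ≥ 1 / w₀ - 3 log a ≥ 1 / w₀`, so `w ≤ w₀ < 0` there and, by continuity, also at `c`.
Hence `w < 0` on all of `(0, 1)`, and then `0 > 1 / w a ≥ 1 / w₀ - 3 log a` fails for small `a`.
-/

open Set Filter Topology

theorem le_of_deriv_nonpos_off_finite {f : ℝ → ℝ} {E : Set ℝ} (hE : E.Finite) {x y : ℝ}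
    (hxy : x ≤ y) (hf : ContinuousOn f (Icc x y))
    (hf' : ∀ t ∈ Ioo x y \ E, DifferentiableAt ℝ f t ∧ deriv f t ≤ 0) : f y ≤ f x := by
  induction E, hE using Set.Finite.induction_on generalizing x y with
  | empty =>
    rw [sdiff_empty] at hf'
    refine antitoneOn_of_deriv_nonpos (convex_Icc x y) hf (fun t ht => ?_) (fun t ht => ?_)
      (left_mem_Icc.2 hxy) (right_mem_Icc.2 hxy) hxy
    · rw [interior_Icc] at ht
      exact (hf' t ht).1.differentiableWithinAt
    · rw [interior_Icc] at ht
      exact (hf' t ht).2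
  | @insert a s _ _ ih =>
    by_cases ha : a ∈ Ioo x y
    · refine (ih ha.2.le (hf.mono (Icc_subset_Icc_left ha.1.le)) fun t ht => hf' t ?_).trans
        (ih ha.1.le (hf.mono (Icc_subset_Icc_right ha.2.le)) fun t ht => hf' t ?_)
      · exact ⟨⟨ha.1.trans ht.1.1, ht.1.2⟩, by simp [ht.1.1.ne', ht.2]⟩
      · exact ⟨⟨ht.1.1, ht.1.2.trans ha.2⟩, by simp [ht.1.2.ne, ht.2]⟩
    · refine ih hxy hf fun t ht => hf' t ⟨ht.1, ?_⟩
      rintro (rfl | hts)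
      exacts [ha ht.1, ht.2 hts]

theorem ContinuousOn.forall_neg_of_eventually_neg_nhdsLT {f : ℝ → ℝ} {a b : ℝ}
    (hf : ContinuousOn f (Ioo a b)) (hb : ∀ᶠ t in 𝓝[<] b, f t < 0)
    (hstep : ∀ c ∈ Ioo a b, (∀ t ∈ Ioo c b, f t < 0) → f c < 0) :
    ∀ t ∈ Ioo a b, f t < 0 := by
  by_contra! ⟨t₀, ht₀, hft₀⟩
  obtain ⟨r, hrb, hr⟩ := mem_nhdsLT_iff_exists_Ioo_subset.1 hb
  set K := Icc t₀ (max r t₀) ∩ f ⁻¹' Ici 0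
  have hKsub : Icc t₀ (max r t₀) ⊆ Ioo a b := Icc_subset_Ioo ht₀.1 (max_lt hrb ht₀.2)
  have hK : IsCompact K := isCompact_Icc.of_isClosed_subset
    ((hf.mono hKsub).preimage_isClosed_of_isClosed isClosed_Icc isClosed_Ici) inter_subset_left
  have hcK : sSup K ∈ K := hK.sSup_mem ⟨t₀, ⟨le_rfl, le_max_right _ _⟩, hft₀⟩
  refine (hstep _ (hKsub hcK.1) fun t ht => ?_).not_ge hcK.2
  by_contra! hft
  rcases le_or_gt t (max r t₀) with htr | htr
  · exact (le_csSup hK.bddAbove ⟨⟨hcK.1.1.trans ht.1.le, htr⟩, hft⟩).not_gt ht.1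
  · exact (hr ⟨(le_max_left _ _).trans_lt htr, ht.2⟩).not_ge hft

theorem neg_div_sq_add_inv_nonpos {u d t : ℝ} (hu : u < 0) (ht : 0 < t)
    (h : u - 1 / 3 * t * d / u ≥ 0) : -d / u ^ 2 + 3 * t⁻¹ ≤ 0 := by
  have hmul : u * (u - 1 / 3 * t * d / u) ≤ 0 := mul_nonpos_of_nonpos_of_nonneg hu.le h
  have h3 : 3 * u ^ 2 ≤ t * d := by
    rw [mul_sub, mul_div_cancel₀ _ hu.ne] at hmul
    nlinarith
  have : -d / u ^ 2 + 3 * t⁻¹ = (3 * u ^ 2 - t * d) / (u ^ 2 * t) := by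
    field_simp [hu.ne, ht.ne']
    ring
  rw [this]
  exact div_nonpos_of_nonpos_of_nonneg (by linarith) (by positivity)

theorem AntitoneOn.le_of_tendsto_nhdsLT {f : ℝ → ℝ} {c b L : ℝ} (hf : AntitoneOn f (Ioo c b))
    (hL : Tendsto f (𝓝[<] b) (𝓝 L)) {a : ℝ} (ha : a ∈ Ioo c b) : L ≤ f a :=
  le_of_tendsto hL <| eventually_of_mem (Ioo_mem_nhdsLT ha.2) fun _ ht =>
    hf ha ⟨ha.1.trans ht.1, ht.2⟩ ht.1.le

section InvAddLog

variable {w : ℝ → ℝ}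

theorem hasDerivAt_inv_add_log {t : ℝ} (hw : DifferentiableAt ℝ w t) (hwt : w t ≠ 0)
    (ht : 0 < t) :
    HasDerivAt (fun s => (w s)⁻¹ + 3 * Real.log s) (-deriv w t / w t ^ 2 + 3 * t⁻¹) t :=
  (hw.hasDerivAt.inv hwt).add ((Real.hasDerivAt_log ht.ne').const_mul 3)

theorem antitoneOn_inv_add_log {c : ℝ} (hc : 0 ≤ c) (hcont : ContinuousOn w (Ioo c 1))
    (hneg : ∀ t ∈ Ioo c 1, w t < 0)
    (hfin : {t ∈ Ioo (0 : ℝ) 1 | ¬ DifferentiableAt ℝ w t}.Finite)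
    (hstab : ∀ a > (0 : ℝ), DifferentiableAt ℝ w a → w a ≠ 0 →
      w a - (1 / 3) * a * deriv w a / w a ≥ 0) :
    AntitoneOn (fun t => (w t)⁻¹ + 3 * Real.log t) (Ioo c 1) := by
  intro x hx y hy hxy
  have hsub : Icc x y ⊆ Ioo c 1 := Icc_subset_Ioo hx.1 hy.2
  refine le_of_deriv_nonpos_off_finite (f := fun t => (w t)⁻¹ + 3 * Real.log t) hfin hxy ?_ fun t ⟨ht, htE⟩ => ?_
  · refine ((hcont.inv₀ fun t ht => (hneg t ht).ne).add
      (continuousOn_const.mul (Real.continuousOn_log.mono fun t ht => ?_))).mono hsub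
    exact (hc.trans_lt ht.1).ne'
  · have htc := hsub (Ioo_subset_Icc_self ht)
    have ht0 := hc.trans_lt htc.1
    have hd : DifferentiableAt ℝ w t := by
      by_contra hd
      exact htE ⟨⟨ht0, htc.2⟩, hd⟩
    have hD := hasDerivAt_inv_add_log hd (hneg t htc).ne ht0
    exact ⟨hD.differentiableAt, hD.deriv ▸
      neg_div_sq_add_inv_nonpos (hneg t htc) ht0 (hstab t ht0 hd (hneg t htc).ne)⟩

theorem tendsto_inv_add_log {w₀ : ℝ} (hw : Tendsto w (𝓝[<] 1) (𝓝 w₀)) (hw₀ : w₀ ≠ 0) :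
    Tendsto (fun t => (w t)⁻¹ + 3 * Real.log t) (𝓝[<] 1) (𝓝 w₀⁻¹) := by
  have hlog : Tendsto (fun t => 3 * Real.log t) (𝓝[<] 1) (𝓝 0) := by
    simpa using ((Real.continuousAt_log one_ne_zero).const_mul 3).tendsto.mono_left
      nhdsWithin_le_nhds
  simpa using (hw.inv₀ hw₀).add hlog

end InvAddLog

theorem stmt_2_general (w : ℝ → ℝ)
    (hfin : {t ∈ Set.Ioo (0 : ℝ) 1 | ¬ DifferentiableAt ℝ w t}.Finite)
    (hstab : ∀ a > (0 : ℝ), DifferentiableAt ℝ w a → w a ≠ 0 →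
      w a - (1 / 3) * a * deriv w a / w a ≥ 0)
    (w₀ : ℝ) (hw₀u : w₀ < 0)
    (hlim : Filter.Tendsto w (nhdsWithin 1 {(1 : ℝ)}ᶜ) (nhds w₀)) :
    ∃ t ∈ Set.Ioo (0 : ℝ) 1, ¬ ContinuousAt w t := by
  by_contra! hcont
  have hcontOn : ContinuousOn w (Ioo 0 1) := fun t ht => (hcont t ht).continuousWithinAt
  have hleft : Tendsto w (𝓝[<] 1) (𝓝 w₀) := hlim.mono_left (nhdsWithin_mono _ fun _ h => ne_of_lt h)
  have hbound : ∀ c, 0 ≤ c → (∀ t ∈ Ioo c 1, w t < 0) →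
      ∀ a ∈ Ioo c 1, w₀⁻¹ ≤ (w a)⁻¹ + 3 * Real.log a := fun c hc hneg _ =>
    (antitoneOn_inv_add_log hc (hcontOn.mono (Ioo_subset_Ioo_left hc)) hneg hfin
      hstab).le_of_tendsto_nhdsLT (tendsto_inv_add_log hleft hw₀u.ne)
  have hneg : ∀ t ∈ Ioo 0 1, w t < 0 := by
    refine hcontOn.forall_neg_of_eventually_neg_nhdsLT (hleft.eventually_lt_const hw₀u)
      fun c hc hnegc => ?_
    have hle : ∀ a ∈ Ioo c 1, w a ≤ w₀ := fun a ha =>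
      (inv_le_inv_of_neg hw₀u (hnegc a ha)).1 <| (hbound c hc.1.le hnegc a ha).trans <| by
        linarith [Real.log_neg (hc.1.trans ha.1) ha.2]
    exact (le_of_tendsto ((hcont c hc).tendsto.mono_left nhdsWithin_le_nhds)
      (eventually_of_mem (Ioo_mem_nhdsGT hc.2) hle)).trans_lt hw₀u
  have ha : Real.exp (w₀⁻¹ / 3) ∈ Ioo 0 1 :=
    ⟨Real.exp_pos _, Real.exp_lt_one_iff.2 (by linarith [inv_lt_zero.2 hw₀u])⟩
  have hga := hbound 0 le_rfl hneg _ ha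
  rw [Real.log_exp] at hga
  linarith [inv_lt_zero.2 (hneg _ ha)]

/-- If `w` is differentiable with continuous derivative on `(0, δ)` for
some `0 < δ < 1`, the set of non-differentiability points in `(0,1)` is finite,
the stability condition holds at every point `a > 0` where `w` is differentiable
and `w a ≠ 0`, `w a ≥ -1` for all `a > 0`, and `w a → w₀` as `a → 1` with
`-1 ≤ w₀ < 0`, then `w` is discontinuous at some point of `(0, 1)`. -/
theorem stmt_2 (w : ℝ → ℝ) (δ : ℝ) (hδ0 : 0 < δ) (hδ1 : δ < 1)
    (hdiff : ∀ t ∈ Set.Ioo (0 : ℝ) δ, DifferentiableAt ℝ w t)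
    (hderiv_cont : ContinuousOn (deriv w) (Set.Ioo (0 : ℝ) δ))
    (hfin : {t ∈ Set.Ioo (0 : ℝ) 1 | ¬ DifferentiableAt ℝ w t}.Finite)
    (hstab : ∀ a > (0 : ℝ), DifferentiableAt ℝ w a → w a ≠ 0 →
      w a - (1 / 3) * a * deriv w a / w a ≥ 0)
    (hbound : ∀ a > (0 : ℝ), w a ≥ -1)
    (w₀ : ℝ) (hw₀l : -1 ≤ w₀) (hw₀u : w₀ < 0)
    (hlim : Filter.Tendsto w (nhdsWithin 1 {(1 : ℝ)}ᶜ) (nhds w₀)) :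
    ∃ t ∈ Set.Ioo (0 : ℝ) 1, ¬ ContinuousAt w t :=
  stmt_2_general w hfin hstab w₀ hw₀u hlim
end

section
/- There is no function w : (0, +∞) → ℝ that is differentiable on all of (0, +∞), has continuous derivative on (0, δ) for some δ > 0, and satisfies: the stability condition (i) at every point a with w(a) ≠ 0; w(a) ≥ −1 for all a > 0; and w(a) → w₀ as a → 1 for some w₀ with −1 ≤ w₀ < 0. -/
open Real Set Topology

/-!
Where `w < 0`, the stability condition reads `3 w² ≤ a w'`, so `g(a) = -1/w(a) - 3 log a` is
nondecreasing. Going left from `a = 1`, as long as `w` stays negative this forces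
`w(a) ≤ w(1) < 0`, so `w` cannot reach `0` on `(0, 1]`; and, since `w ≥ -1` gives `-1/w ≥ 1`,
it forces `log a ≥ (1 + 1/w(1))/3`, which fails for small `a`.
-/

lemma three_mul_sq_le_of_sub_div_nonneg {x y d : ℝ} (hy : y < 0)
    (h : y - 1 / 3 * x * d / y ≥ 0) : 3 * y ^ 2 ≤ x * d := by
  have h' : 1 / 3 * x * d / y ≤ y := by linarith
  rw [div_le_iff_of_neg hy] at h'
  nlinarith

lemma monotoneOn_neg_inv_sub_three_mul_log {w : ℝ → ℝ} {a b : ℝ} (ha : 0 < a)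
    (hw : ∀ x ∈ Icc a b, DifferentiableAt ℝ w x) (hneg : ∀ x ∈ Icc a b, w x < 0)
    (hder : ∀ x ∈ Icc a b, 3 * w x ^ 2 ≤ x * deriv w x) :
    MonotoneOn (fun x => -(w x)⁻¹ - 3 * log x) (Icc a b) := by
  have hg : ∀ x ∈ Icc a b,
      HasDerivAt (fun x => -(w x)⁻¹ - 3 * log x) (deriv w x / w x ^ 2 - 3 * x⁻¹) x := by
    intro x hx
    have hinv := ((hw x hx).hasDerivAt.inv (hneg x hx).ne).neg
    rw [neg_div, neg_neg] at hinv
    exact hinv.sub ((hasDerivAt_log (ha.trans_le hx.1).ne').const_mul 3)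
  refine monotoneOn_of_hasDerivWithinAt_nonneg (convex_Icc a b)
    (fun x hx => (hg x hx).continuousAt.continuousWithinAt)
    (fun x hx => (hg x (interior_subset hx)).hasDerivWithinAt) fun x hx => ?_
  have hx := interior_subset hx
  have hx0 : 0 < x := ha.trans_le hx.1
  have hw2 : 0 < w x ^ 2 := sq_pos_of_neg (hneg x hx)
  rw [sub_nonneg, le_div_iff₀ hw2]
  calc 3 * x⁻¹ * w x ^ 2 = x⁻¹ * (3 * w x ^ 2) := by ring
    _ ≤ x⁻¹ * (x * deriv w x) := mul_le_mul_of_nonneg_left (hder x hx) (inv_nonneg.mpr hx0.le)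
    _ = deriv w x := by field_simp

lemma le_of_neg_inv_sub_three_mul_log_le {u v a b : ℝ} (hu : u < 0) (hv : v < 0) (ha : 0 < a)
    (hab : a ≤ b) (h : -u⁻¹ - 3 * log a ≤ -v⁻¹ - 3 * log b) : u ≤ v := by
  have hlog : log a ≤ log b := log_le_log ha hab
  rw [← inv_le_inv_of_neg hv hu]
  linarith

lemma add_log_le_of_neg_inv_sub_three_mul_log_le {u v a b : ℝ} (hu : -1 ≤ u) (hu0 : u < 0)
    (h : -u⁻¹ - 3 * log a ≤ -v⁻¹ - 3 * log b) : (1 + v⁻¹) / 3 + log b ≤ log a := by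
  have : 1 ≤ -u⁻¹ := by
    have := mul_inv_cancel₀ hu0.ne
    nlinarith
  linarith

/- If `c` is the largest point of `[a, b]` with `w c ≥ 0`, then `w < 0` on `(c, b]`, so
`w c ≤ w b < 0` by continuity from the right. -/
lemma forall_Icc_neg_of_le_right {w : ℝ → ℝ} {a b : ℝ} (hw : ContinuousOn w (Icc a b))
    (hb : w b < 0) (hle : ∀ x ∈ Icc a b, (∀ y ∈ Icc x b, w y < 0) → w x ≤ w b) :
    ∀ x ∈ Icc a b, w x < 0 := by
  by_contra! hZ
  set Z := Icc a b ∩ w ⁻¹' Ici 0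
  have hZc : IsCompact Z :=
    isCompact_Icc.of_isClosed_subset (hw.preimage_isClosed_of_isClosed isClosed_Icc isClosed_Ici)
      inter_subset_left
  obtain ⟨c, ⟨hcI, hc0⟩, hcmax⟩ := hZc.exists_isGreatest hZ
  have hright : ∀ y ∈ Ioc c b, w y < 0 := fun y hy =>
    not_le.mp fun hy0 => (hy.1.trans_le (hcmax ⟨⟨hcI.1.trans hy.1.le, hy.2⟩, hy0⟩)).false
  have hcb : c < b := hcI.2.lt_of_ne (by rintro rfl; exact (hc0.trans_lt hb).false.elim)
  have hlim : w c ≤ w b := by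
    refine le_of_tendsto (x := 𝓝[>] c) ((hw c hcI).mono_of_mem_nhdsWithin ?_) ?_
    · exact Filter.mem_of_superset (Ioo_mem_nhdsGT hcb)
        fun y hy => ⟨hcI.1.trans hy.1.le, hy.2.le⟩
    · filter_upwards [Ioo_mem_nhdsGT hcb] with y hy
      exact hle y ⟨hcI.1.trans hy.1.le, hy.2.le⟩
        fun z hz => hright z ⟨hy.1.trans_le hz.1, hz.2⟩
  exact absurd (hc0.trans hlim) (not_le.mpr hb)

/-- There is no function `w` differentiable on all of `(0, +∞)`, with
continuous derivative on `(0, δ)` for some `δ > 0`, satisfying the stability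
condition at every `a > 0` with `w a ≠ 0`, with `w a ≥ -1` for all `a > 0`, and
with `w a → w₀` as `a → 1` for some `-1 ≤ w₀ < 0`. -/
theorem stmt_3 :
    ¬ ∃ (w : ℝ → ℝ) (δ w₀ : ℝ),
      0 < δ ∧
      (∀ a ∈ Set.Ioi (0 : ℝ), DifferentiableAt ℝ w a) ∧
      ContinuousOn (deriv w) (Set.Ioo (0 : ℝ) δ) ∧
      (∀ a > (0 : ℝ), w a ≠ 0 → w a - (1 / 3) * a * deriv w a / w a ≥ 0) ∧
      (∀ a > (0 : ℝ), w a ≥ -1) ∧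
      -1 ≤ w₀ ∧ w₀ < 0 ∧
      Filter.Tendsto w (nhdsWithin 1 {(1 : ℝ)}ᶜ) (nhds w₀) := by
  rintro ⟨w, -, w₀, -, hdiff, -, hstab, hlb, -, hw₀, hlim⟩
  have hcont : ∀ x > 0, ContinuousAt w x := fun x hx => (hdiff x hx).continuousAt
  have hw1 : w 1 < 0 := tendsto_nhds_unique (hcont 1 one_pos).continuousWithinAt hlim ▸ hw₀
  set a₀ := exp ((1 + (w 1)⁻¹) / 3 - 1)
  have ha₀ : 0 < a₀ := exp_pos _
  have ha₀1 : a₀ ≤ 1 := exp_le_one_iff.mpr (by linarith [inv_lt_zero.mpr hw1])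
  have hg : ∀ x ∈ Icc a₀ 1, (∀ y ∈ Icc x 1, w y < 0) →
      -(w x)⁻¹ - 3 * log x ≤ -(w 1)⁻¹ - 3 * log 1 := fun x hx hneg =>
    monotoneOn_neg_inv_sub_three_mul_log (ha₀.trans_le hx.1)
      (fun y hy => hdiff y (ha₀.trans_le (hx.1.trans hy.1))) hneg
      (fun y hy => three_mul_sq_le_of_sub_div_nonneg (hneg y hy)
        (hstab y (ha₀.trans_le (hx.1.trans hy.1)) (hneg y hy).ne))
      (left_mem_Icc.mpr hx.2) (right_mem_Icc.mpr hx.2) hx.2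
  have hneg : ∀ x ∈ Icc a₀ 1, w x < 0 :=
    forall_Icc_neg_of_le_right
      (fun x hx => (hcont x (ha₀.trans_le hx.1)).continuousWithinAt) hw1
      fun x hx hneg => le_of_neg_inv_sub_three_mul_log_le (hneg x (left_mem_Icc.mpr hx.2)) hw1
        (ha₀.trans_le hx.1) hx.2 (hg x hx hneg)
  have hlog := add_log_le_of_neg_inv_sub_three_mul_log_le (hlb a₀ ha₀)
    (hneg a₀ (left_mem_Icc.mpr ha₀1)) (hg a₀ (left_mem_Icc.mpr ha₀1) hneg)
  rw [log_one, log_exp] at hlog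
  linarith
end

section
/- Let −1 < w₀ < 0 and d = (w₀ + 1)/(3 w₀). Define w : (0, +∞) → ℝ by w(a) = −a/(2 e^d) + 1 for a ∈ (0, e^d] and w(a) = −1/(3 ln a − 1/w₀) for a ∈ (e^d, +∞). Then: (1) the stability condition (i) holds at every point a ≠ e^d at which w(a) ≠ 0 (w is differentiable at all such points); (2) w(a) → w₀ as a → 1; and (3) −1 ≤ w(a) ≤ 1 for all a > 0. -/
/-!
The logarithmic branch `w = -1 / (3 ln a - c)` solves `a w' = 3 w²`, so it satisfies the
stability condition with equality. On the linear branch `w` is positive and decreasing, so the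
condition holds with room to spare. The constant `d` is the point where `3 d - 1 / w₀ = 1`: the
logarithmic branch equals `-1` at `e^d` and increases towards `0` beyond it, and since
`e^d < 1` it takes the value `w₀` at `a = 1`.
-/

open Real Filter Topology Set

noncomputable def logBranch (c x : ℝ) : ℝ := -1 / (3 * log x - c)

noncomputable def stableProfile (b c x : ℝ) : ℝ :=
  if x ≤ b then -x / (2 * b) + 1 else logBranch c x

/-- `w - (1/3) · d ln|w| / d ln a`; condition (i) is `0 ≤ stabilityDefect w a`. -/
noncomputable def stabilityDefect (w : ℝ → ℝ) (a : ℝ) : ℝ :=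
  w a - 1 / 3 * a * deriv w a / w a

section Piecewise

variable {α β : Type*} [TopologicalSpace α] [LinearOrder α] [OrderClosedTopology α]
  {f g : α → β} {a b : α}

theorem ite_le_eventuallyEq_left (h : a < b) :
    (fun x => if x ≤ b then f x else g x) =ᶠ[𝓝 a] f := by
  filter_upwards [Iio_mem_nhds h] with x hx using if_pos (le_of_lt hx)

theorem ite_le_eventuallyEq_right (h : b < a) :
    (fun x => if x ≤ b then f x else g x) =ᶠ[𝓝 a] g := by
  filter_upwards [Ioi_mem_nhds h] with x hx using if_neg (not_le.mpr hx)

end Piecewise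

theorem Filter.EventuallyEq.stabilityDefect_eq {w v : ℝ → ℝ} {a : ℝ} (h : w =ᶠ[𝓝 a] v) :
    stabilityDefect w a = stabilityDefect v a := by
  rw [stabilityDefect, stabilityDefect, h.eq_of_nhds, h.deriv_eq]

theorem stabilityDefect_nonneg_of_deriv_nonpos {w : ℝ → ℝ} {a : ℝ} (ha : 0 ≤ a)
    (hw : 0 < w a) (hw' : deriv w a ≤ 0) : 0 ≤ stabilityDefect w a := by
  have : 1 / 3 * a * deriv w a / w a ≤ 0 :=
    div_nonpos_of_nonpos_of_nonneg (mul_nonpos_of_nonneg_of_nonpos (by positivity) hw') hw.le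
  rw [stabilityDefect]
  linarith

theorem hasDerivAt_logBranch {c a : ℝ} (ha : a ≠ 0) (hc : 3 * log a - c ≠ 0) :
    HasDerivAt (logBranch c) (3 * logBranch c a ^ 2 / a) a := by
  have h := ((((hasDerivAt_log ha).const_mul 3).sub_const c).inv hc).neg
  refine (h.congr_deriv ?_).congr_of_eventuallyEq (.of_forall fun x => ?_)
  · rw [logBranch]
    field_simp
  · simp [logBranch, neg_div]

theorem stabilityDefect_logBranch {c a : ℝ} (ha : a ≠ 0) (hc : 3 * log a - c ≠ 0) :
    stabilityDefect (logBranch c) a = 0 := by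
  have hw : logBranch c a ≠ 0 := by simp [logBranch, hc]
  rw [stabilityDefect, (hasDerivAt_logBranch ha hc).deriv]
  field_simp
  ring

theorem logBranch_mem_Ioo {c a : ℝ} (h : 1 < 3 * log a - c) : logBranch c a ∈ Ioo (-1) 0 := by
  have h0 : 0 < 1 / (3 * log a - c) := by positivity
  have h1 : 1 / (3 * log a - c) < 1 := (div_lt_one (by linarith)).mpr h
  rw [logBranch, neg_div]
  constructor <;> linarith

theorem logBranch_one_div_one (w₀ : ℝ) : logBranch (1 / w₀) 1 = w₀ := by
  simp [logBranch]

section StableProfile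

variable {a b c : ℝ}

theorem lt_three_mul_log_sub (hb : 0 < b) (hab : b < a) :
    3 * log b - c < 3 * log a - c := by
  have := log_lt_log hb hab
  linarith

theorem stableProfile_eventuallyEq_of_lt (hab : a < b) :
    stableProfile b c =ᶠ[𝓝 a] fun x => -x / (2 * b) + 1 :=
  ite_le_eventuallyEq_left hab

theorem stableProfile_eventuallyEq_of_gt (hab : b < a) :
    stableProfile b c =ᶠ[𝓝 a] logBranch c :=
  ite_le_eventuallyEq_right hab

theorem hasDerivAt_stableProfile_of_lt (hab : a < b) :
    HasDerivAt (stableProfile b c) (-1 / (2 * b)) a := by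
  have h : HasDerivAt (fun x : ℝ => -x / (2 * b) + 1) (-1 / (2 * b)) a :=
    ((hasDerivAt_id a).neg.div_const (2 * b)).add_const 1
  exact h.congr_of_eventuallyEq (stableProfile_eventuallyEq_of_lt hab)

theorem hasDerivAt_stableProfile_of_gt (hb : 0 < b) (hbc : 0 ≤ 3 * log b - c) (hab : b < a) :
    HasDerivAt (stableProfile b c) (3 * logBranch c a ^ 2 / a) a :=
  (hasDerivAt_logBranch (hb.trans hab).ne' (by linarith [lt_three_mul_log_sub (c := c) hb hab]))
    |>.congr_of_eventuallyEq (stableProfile_eventuallyEq_of_gt hab)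

theorem differentiableAt_stableProfile (hb : 0 < b) (hbc : 0 ≤ 3 * log b - c) (hab : a ≠ b) :
    DifferentiableAt ℝ (stableProfile b c) a := by
  rcases hab.lt_or_gt with h | h
  · exact (hasDerivAt_stableProfile_of_lt h).differentiableAt
  · exact (hasDerivAt_stableProfile_of_gt hb hbc h).differentiableAt

theorem stabilityDefect_stableProfile_nonneg (hb : 0 < b) (hbc : 0 ≤ 3 * log b - c)
    (ha : 0 ≤ a) (hab : a ≠ b) : 0 ≤ stabilityDefect (stableProfile b c) a := by
  rcases hab.lt_or_gt with h | h
  · have hpos : 0 < stableProfile b c a := by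
      have : a / (2 * b) < 1 := (div_lt_one (by linarith)).mpr (by linarith)
      rw [stableProfile, if_pos h.le, neg_div]
      linarith
    refine stabilityDefect_nonneg_of_deriv_nonpos ha hpos ?_
    rw [(hasDerivAt_stableProfile_of_lt h).deriv]
    exact div_nonpos_of_nonpos_of_nonneg (by norm_num) (by linarith)
  · have ht : 3 * log a - c ≠ 0 := by linarith [lt_three_mul_log_sub (c := c) hb h]
    rw [(stableProfile_eventuallyEq_of_gt h).stabilityDefect_eq,
      stabilityDefect_logBranch (hb.trans h).ne' ht]

theorem stableProfile_mem_Icc (hb : 0 < b) (hbc : 1 ≤ 3 * log b - c) (ha : 0 ≤ a) :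
    stableProfile b c a ∈ Icc (-1) 1 := by
  rcases le_or_gt a b with h | h
  · have h0 : 0 ≤ a / (2 * b) := by positivity
    have h1 : a / (2 * b) ≤ 1 := (div_le_one (by linarith)).mpr (by linarith)
    rw [stableProfile, if_pos h, neg_div]
    constructor <;> linarith
  · rw [stableProfile, if_neg h.not_ge]
    exact Ioo_subset_Icc_self.trans (Icc_subset_Icc_right zero_le_one)
      (logBranch_mem_Ioo (by linarith [lt_three_mul_log_sub (c := c) hb h]))

theorem tendsto_stableProfile_one {w₀ : ℝ} (hb : b < 1) (hw₀ : w₀ ≠ 0) :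
    Tendsto (stableProfile b (1 / w₀)) (𝓝[≠] 1) (𝓝 w₀) := by
  have hc : ContinuousAt (logBranch (1 / w₀)) 1 :=
    (hasDerivAt_logBranch one_ne_zero (by simpa using hw₀)).continuousAt
  have h := (hc.congr (stableProfile_eventuallyEq_of_gt hb).symm).tendsto
  rw [stableProfile, if_neg hb.not_ge, logBranch_one_div_one] at h
  exact h.mono_left nhdsWithin_le_nhds

end StableProfile

/-- For `-1 < w₀ < 0` and `d = (w₀+1)/(3w₀)`, the function `w` equal
to `-a/(2 e^d) + 1` on `(0, e^d]` and to `-1/(3 ln a - 1/w₀)` on `(e^d, +∞)`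
satisfies: (1) `w` is differentiable at every `a > 0` with `a ≠ e^d`, and the
stability condition holds at every such point where `w a ≠ 0`; (2) `w a → w₀`
as `a → 1`; (3) `-1 ≤ w a ≤ 1` for all `a > 0`. -/
theorem stmt_5 (w₀ : ℝ) (hw₀l : -1 < w₀) (hw₀u : w₀ < 0)
    (d : ℝ) (hd : d = (w₀ + 1) / (3 * w₀))
    (w : ℝ → ℝ)
    (hw : w = fun a => if a ≤ Real.exp d then -a / (2 * Real.exp d) + 1
      else -1 / (3 * Real.log a - 1 / w₀)) :
    (∀ a ∈ Set.Ioi (0 : ℝ), a ≠ Real.exp d → DifferentiableAt ℝ w a) ∧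
    (∀ a ∈ Set.Ioi (0 : ℝ), a ≠ Real.exp d → w a ≠ 0 →
        w a - (1 / 3) * a * deriv w a / w a ≥ 0) ∧
    Filter.Tendsto w (nhdsWithin 1 {(1 : ℝ)}ᶜ) (nhds w₀) ∧
    (∀ a > (0 : ℝ), -1 ≤ w a ∧ w a ≤ 1) := by
  obtain rfl : w = stableProfile (exp d) (1 / w₀) := hw
  have hb : 0 < exp d := exp_pos d
  have hbc : 3 * log (exp d) - 1 / w₀ = 1 := by
    have := hw₀u.ne
    rw [log_exp, hd]
    field_simp
    ring
  have hb1 : exp d < 1 :=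
    exp_lt_one_iff.mpr (hd ▸ div_neg_of_pos_of_neg (by linarith) (by linarith))
  refine ⟨fun a _ hab => differentiableAt_stableProfile hb (by linarith) hab,
    fun a ha hab _ => stabilityDefect_stableProfile_nonneg hb (by linarith) (le_of_lt ha) hab,
    tendsto_stableProfile_one hb1 hw₀u.ne, fun a ha => stableProfile_mem_Icc hb hbc.ge ha.le⟩
end

section
/- There is no function w : (0, +∞) → ℝ with the following properties: there exists an open interval J containing 1 such that w is differentiable at every point of J ∖ {1}; the stability condition (i) holds at every point a at which w is differentiable and w(a) ≠ 0; w(a) → −1 as a → 1; and −1 ≤ w(a) ≤ 1 for all a > 0. -/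
open Filter Set Topology

/-!
Where `w < 0`, multiplying the stability condition by `w` gives `a w' ≥ 3 w² > 0`, so `w` is
strictly increasing on a left neighbourhood `(c, 1)` of `1` on which it is negative. A strictly
increasing function stays strictly below its left limit `-1`, contradicting `-1 ≤ w`.
-/

theorem pos_of_stability_of_neg {x y a : ℝ} (ha : 0 < a) (hx : x < 0)
    (h : x - 1 / 3 * a * y / x ≥ 0) : 0 < y := by
  have hxy : x * x ≤ 1 / 3 * a * y := by
    rw [← div_le_iff_of_neg hx]
    linarith
  nlinarith

theorem StrictMonoOn.lt_of_tendsto_nhdsLT {α β : Type*} [TopologicalSpace α] [LinearOrder α]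
    [OrderTopology α] [DenselyOrdered α] [NoMinOrder α] [TopologicalSpace β] [Preorder β]
    [ClosedIciTopology β] {f : α → β} {c d : α} {L : β} (hf : StrictMonoOn f (Ioo c d))
    (hlim : Tendsto f (𝓝[<] d) (𝓝 L)) {x : α} (hx : x ∈ Ioo c d) : f x < L := by
  obtain ⟨y, hxy, hyd⟩ := exists_between hx.2
  have hy : y ∈ Ioo c d := ⟨hx.1.trans hxy, hyd⟩
  have hyL : f y ≤ L := ge_of_tendsto hlim <| by
    filter_upwards [Ioo_mem_nhdsLT hyd] with z hz
    exact (hf hy ⟨hy.1.trans hz.1, hz.2⟩ hz.1).le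
  exact (hf hx hy hxy).trans_le hyL

/-- There is no function `w : (0, +∞) → ℝ` such that: there exists an
open interval `J ⊆ (0, +∞)` containing `1` with `w` differentiable at every point
of `J \ {1}`; the stability condition holds at every `a > 0` where `w` is
differentiable and `w a ≠ 0`; `w a → -1` as `a → 1`; and `-1 ≤ w a ≤ 1` for all
`a > 0`. -/
theorem stmt_7 :
    ¬ ∃ (w : ℝ → ℝ) (l u : ℝ),
      0 ≤ l ∧ l < 1 ∧ 1 < u ∧
      (∀ a ∈ Set.Ioo l u, a ≠ 1 → DifferentiableAt ℝ w a) ∧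
      (∀ a > (0 : ℝ), DifferentiableAt ℝ w a → w a ≠ 0 →
        w a - (1 / 3) * a * deriv w a / w a ≥ 0) ∧
      Filter.Tendsto w (nhdsWithin 1 {(1 : ℝ)}ᶜ) (nhds (-1)) ∧
      (∀ a > (0 : ℝ), -1 ≤ w a ∧ w a ≤ 1) := by
  rintro ⟨w, l, u, hl0, hl1, hu1, hdiff, hstab, htend, hbound⟩
  have hleft : Tendsto w (𝓝[<] 1) (𝓝 (-1)) :=
    htend.mono_left (nhdsWithin_mono _ fun x hx => ne_of_lt hx)
  obtain ⟨c, hc1, hneg⟩ := mem_nhdsLT_iff_exists_Ioo_subset.mp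
    (hleft.eventually (eventually_lt_nhds (by norm_num : (-1 : ℝ) < 0)))
  set J := Ioo (max c l) 1
  have hJ : ∀ a ∈ J, 0 < a ∧ DifferentiableAt ℝ w a ∧ w a < 0 := fun a ha =>
    ⟨hl0.trans_lt ((le_max_right c l).trans_lt ha.1),
      hdiff a ⟨(le_max_right c l).trans_lt ha.1, ha.2.trans hu1⟩ ha.2.ne,
      hneg ⟨(le_max_left c l).trans_lt ha.1, ha.2⟩⟩
  have hmono : StrictMonoOn w J := by
    refine strictMonoOn_of_deriv_pos (convex_Ioo _ _)
      (fun a ha => (hJ a ha).2.1.continuousAt.continuousWithinAt) fun a ha => ?_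
    rw [interior_Ioo] at ha
    obtain ⟨ha0, hda, hwa⟩ := hJ a ha
    exact pos_of_stability_of_neg ha0 hwa (hstab a ha0 hda hwa.ne)
  obtain ⟨a, ha⟩ : J.Nonempty := nonempty_Ioo.mpr (max_lt hc1 hl1)
  exact (hmono.lt_of_tendsto_nhdsLT hleft ha).not_ge (hbound a (hJ a ha).1).1
end

section
/- Let w : (0, +∞) → ℝ be differentiable on (0, δ) for some δ > 0 and suppose the stability condition (i) holds at every point a ∈ (0, δ) with w(a) ≠ 0. Suppose c < 0, ε > 0, t₀ ∈ (0, δ) with t₀ + ε < δ, and w(t) < c for all t ∈ (t₀ − ε, t₀ + ε). Then w(t) ≤ c for all t ∈ (0, t₀ + ε). -/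
/-!
If `w` rose above `c` somewhere left of `t₀`, then at the last crossing `a` of the level `c`
before `t₀` we would have `w' a ≤ 0`. But the stability condition at a point with
`w a = c < 0` gives `a * w' a ≥ 3 c² > 0`.
-/

open Set

theorem le_of_deriv_pos_of_eq_of_le {w : ℝ → ℝ} {c s b : ℝ}
    (hdiff : ∀ x ∈ Icc s b, DifferentiableAt ℝ w x) (hb : w b ≤ c)
    (hpos : ∀ x ∈ Ioc s b, w x = c → 0 < deriv w x) :
    ∀ x ∈ Icc s b, w x ≤ c := by
  have hderiv : ∀ y ∈ Icc (-b) (-s),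
      HasDerivAt (fun y ↦ w (-y)) (deriv w (-y) * -1) y := fun y hy ↦
    (hdiff (-y) ⟨le_neg.mpr hy.2, neg_le.mpr hy.1⟩).hasDerivAt.comp y (hasDerivAt_neg y)
  -- The fencing theorem propagates bounds to the right, so apply it to `y ↦ w (-y)`.
  have hfence := image_le_of_deriv_right_lt_deriv_boundary (a := -b) (b := -s)
    (f := fun y ↦ w (-y)) (B := fun _ ↦ c) (B' := fun _ ↦ 0)
    (fun y hy ↦ (hderiv y hy).continuousAt.continuousWithinAt)
    (fun y hy ↦ (hderiv y (Ico_subset_Icc_self hy)).hasDerivWithinAt)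
    (by simpa using hb) (fun _ ↦ hasDerivAt_const _ _)
    (fun y hy hwy ↦ by
      have := hpos (-y) ⟨lt_neg.mpr hy.2, neg_le.mpr hy.1⟩ hwy
      linarith)
  intro x hx
  simpa using hfence (x := -x) ⟨neg_le_neg hx.2, neg_le_neg hx.1⟩

theorem deriv_pos_of_stability {w : ℝ → ℝ} {a : ℝ} (ha : 0 < a) (hwa : w a < 0)
    (hstab : w a - (1 / 3) * a * deriv w a / w a ≥ 0) : 0 < deriv w a := by
  have hquot : a * deriv w a / w a ≤ 3 * w a := by
    rw [mul_assoc, mul_div_assoc] at hstab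
    linarith
  have hprod : 3 * w a * w a ≤ a * deriv w a := (div_le_iff_of_neg hwa).mp hquot
  have : 0 < a * deriv w a := (mul_pos_of_neg_of_neg (by linarith) hwa).trans_le hprod
  exact pos_of_mul_pos_right this ha.le

theorem stmt_9_general (w : ℝ → ℝ) (δ : ℝ)
    (hdiff : ∀ t ∈ Set.Ioo (0 : ℝ) δ, DifferentiableAt ℝ w t)
    (hstab : ∀ a ∈ Set.Ioo (0 : ℝ) δ, w a ≠ 0 →
      w a - (1 / 3) * a * deriv w a / w a ≥ 0)
    (c : ℝ) (hc : c < 0) (ε : ℝ) (hε : 0 < ε)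
    (t₀ : ℝ) (ht₀ε : t₀ + ε < δ)
    (hlt : ∀ t ∈ Set.Ioo (t₀ - ε) (t₀ + ε), w t < c) :
    ∀ t ∈ Set.Ioo (0 : ℝ) (t₀ + ε), w t ≤ c := by
  rintro t ⟨ht0, htε⟩
  rcases le_or_gt t t₀ with htt₀ | htt₀
  · have hsub : Icc t t₀ ⊆ Ioo 0 δ := fun x hx ↦ ⟨ht0.trans_le hx.1, by linarith [hx.2]⟩
    refine le_of_deriv_pos_of_eq_of_le (fun x hx ↦ hdiff x (hsub hx))
      (hlt t₀ ⟨by linarith, by linarith⟩).le (fun x hx hwx ↦ ?_) t ⟨le_rfl, htt₀⟩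
    have hx : x ∈ Ioo 0 δ := hsub (Ioc_subset_Icc_self hx)
    exact deriv_pos_of_stability hx.1 (hwx ▸ hc) (hstab x hx (hwx ▸ hc.ne))
  · exact (hlt t ⟨by linarith, htε⟩).le

/-- If `w` is differentiable on `(0, δ)` and satisfies the stability
condition on `(0, δ)` wherever `w a ≠ 0`, and if `c < 0`, `ε > 0`,
`t₀ ∈ (0, δ)` with `t₀ + ε < δ` and `w t < c` on `(t₀ - ε, t₀ + ε)`, then
`w t ≤ c` for all `t ∈ (0, t₀ + ε)`. -/
theorem stmt_9 (w : ℝ → ℝ) (δ : ℝ) (hδ : 0 < δ)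
    (hdiff : ∀ t ∈ Set.Ioo (0 : ℝ) δ, DifferentiableAt ℝ w t)
    (hstab : ∀ a ∈ Set.Ioo (0 : ℝ) δ, w a ≠ 0 →
      w a - (1 / 3) * a * deriv w a / w a ≥ 0)
    (c : ℝ) (hc : c < 0) (ε : ℝ) (hε : 0 < ε)
    (t₀ : ℝ) (ht₀ : t₀ ∈ Set.Ioo (0 : ℝ) δ) (ht₀ε : t₀ + ε < δ)
    (hlt : ∀ t ∈ Set.Ioo (t₀ - ε) (t₀ + ε), w t < c) :
    ∀ t ∈ Set.Ioo (0 : ℝ) (t₀ + ε), w t ≤ c :=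
  stmt_9_general w δ hdiff hstab c hc ε hε t₀ ht₀ε hlt
end

section
/- Let 0 < T, let c < 0, and let w : (0, +∞) → ℝ be differentiable on (0, T] with w(t) ≤ c for all t ∈ (0, T] and w′(t) ≥ w(t)²/(3t) for all t ∈ (0, T]. Then for every s with 0 < s < T one has w(T) − w(s) ≥ (c²/3)·(ln T − ln s); consequently w(s) → −∞ as s → 0⁺. -/
open Set Filter Topology Real

/- Since `w ≤ c < 0`, we have `w² ≥ c²`, so `w' ≥ (c²/3)/t` on `(0, T]`. Hence
`w - (c²/3) log` is nondecreasing there, which gives the inequality; letting `s → 0⁺`,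
`w s ≤ w T - (c²/3)(log T - log s) → -∞`. -/

theorem monotoneOn_sub_mul_log {w : ℝ → ℝ} {k : ℝ} {D : Set ℝ} (hD : Convex ℝ D)
    (hpos : D ⊆ Ioi 0) (hdiff : ∀ t ∈ D, DifferentiableAt ℝ w t)
    (hderiv : ∀ t ∈ D, k / t ≤ deriv w t) :
    MonotoneOn (fun t => w t - k * log t) D := by
  have hasDeriv : ∀ t ∈ D, HasDerivAt (fun t => w t - k * log t) (deriv w t - k * t⁻¹) t :=
    fun t ht => (hdiff t ht).hasDerivAt.sub ((hasDerivAt_log (hpos ht).ne').const_mul k)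
  refine monotoneOn_of_deriv_nonneg hD (fun t ht => (hasDeriv t ht).continuousAt.continuousWithinAt)
    (fun t ht => (hasDeriv t (interior_subset ht)).differentiableAt.differentiableWithinAt)
    fun t ht => ?_
  rw [(hasDeriv t (interior_subset ht)).deriv, sub_nonneg, ← div_eq_mul_inv]
  exact hderiv t (interior_subset ht)

theorem tendsto_atBot_of_le_add_mul_log {w : ℝ → ℝ} {a k : ℝ} (hk : 0 < k)
    (hle : ∀ᶠ s in 𝓝[>] 0, w s ≤ a + k * log s) : Tendsto w (𝓝[>] 0) atBot :=
  tendsto_atBot_mono' _ hle <|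
    tendsto_atBot_add_const_left _ a (tendsto_log_nhdsGT_zero.const_mul_atBot hk)

/-- If `0 < T`, `c < 0`, and `w` is differentiable on `(0, T]` with
`w t ≤ c` and `w' t ≥ w t ^ 2 / (3 t)` on `(0, T]`, then for all `0 < s < T` we
have `w T - w s ≥ (c² / 3) (ln T - ln s)`; consequently `w s → -∞` as `s → 0⁺`. -/
theorem stmt_10 (T c : ℝ) (hT : 0 < T) (hc : c < 0) (w : ℝ → ℝ)
    (hdiff : ∀ t ∈ Set.Ioc (0 : ℝ) T, DifferentiableAt ℝ w t)
    (hle : ∀ t ∈ Set.Ioc (0 : ℝ) T, w t ≤ c)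
    (hderiv : ∀ t ∈ Set.Ioc (0 : ℝ) T, deriv w t ≥ (w t) ^ 2 / (3 * t)) :
    (∀ s : ℝ, 0 < s → s < T →
      w T - w s ≥ c ^ 2 / 3 * (Real.log T - Real.log s)) ∧
    Filter.Tendsto w (nhdsWithin 0 (Set.Ioi 0)) Filter.atBot := by
  have hderiv' : ∀ t ∈ Ioc 0 T, c ^ 2 / 3 / t ≤ deriv w t := fun t ht => by
    have hsq : c ^ 2 ≤ w t ^ 2 := by nlinarith [hle t ht]
    calc c ^ 2 / 3 / t = c ^ 2 / (3 * t) := div_div _ _ _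
      _ ≤ w t ^ 2 / (3 * t) := by have := ht.1; gcongr
      _ ≤ deriv w t := hderiv t ht
  have hmono := monotoneOn_sub_mul_log (convex_Ioc 0 T) Ioc_subset_Ioi_self hdiff hderiv'
  have key : ∀ s, 0 < s → s < T → w T - w s ≥ c ^ 2 / 3 * (log T - log s) := by
    intro s hs hsT
    have := hmono ⟨hs, hsT.le⟩ ⟨hT, le_rfl⟩ hsT.le
    simp only at this
    linarith
  refine ⟨key, tendsto_atBot_of_le_add_mul_log (a := w T - c ^ 2 / 3 * log T)
    (k := c ^ 2 / 3) (by nlinarith) ?_⟩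
  filter_upwards [Ioo_mem_nhdsGT hT] with s hs
  linarith [key s hs.1 hs.2]
end

section
/- Let J ⊆ (0, +∞) be an interval, and let w : (0, +∞) → ℝ be differentiable at every point of J with w(a) < 0 for all a ∈ J, and suppose the stability condition (i) holds at every point of J. Then w is strictly increasing on J, i.e. for all s, t ∈ J with s < t one has w(s) < w(t). -/
/-!
For `w < 0` the stability condition says `(a / 3) · w'/w ≤ w < 0`, so `w'/w < 0` and hence
`w' > 0` at every point of `J`. A positive derivative forces differentiability, so `w` is
continuous on the interval `J` with positive derivative, and the mean value theorem gives
strict monotonicity.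
-/

lemma pos_of_sub_div_nonneg {a w d : ℝ} (ha : 0 < a) (hw : w < 0)
    (h : w - (1 / 3) * a * d / w ≥ 0) : 0 < d := by
  have hquot : (1 / 3) * a * d / w < 0 := by linarith
  have hprod : 0 < (1 / 3) * a * d := by
    by_contra! hle
    exact hquot.not_ge (div_nonneg_of_nonpos hle hw.le)
  nlinarith

lemma strictMonoOn_of_forall_deriv_pos {J : Set ℝ} (hJ : J.OrdConnected) {f : ℝ → ℝ}
    (hf' : ∀ x ∈ J, 0 < deriv f x) : StrictMonoOn f J :=
  strictMonoOn_of_deriv_pos hJ.convex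
    (fun x hx => (differentiableAt_of_deriv_ne_zero (hf' x hx).ne').continuousAt.continuousWithinAt)
    (fun x hx => hf' x (interior_subset hx))

theorem stmt_12_general (J : Set ℝ) (hJ : J ⊆ Set.Ioi (0 : ℝ)) (hJint : J.OrdConnected)
    (w : ℝ → ℝ)
    (hneg : ∀ a ∈ J, w a < 0)
    (hstab : ∀ a ∈ J, w a - (1 / 3) * a * deriv w a / w a ≥ 0) :
    ∀ s ∈ J, ∀ t ∈ J, s < t → w s < w t :=
  fun _ hs _ ht hst => strictMonoOn_of_forall_deriv_pos hJint
    (fun a ha => pos_of_sub_div_nonneg (hJ ha) (hneg a ha) (hstab a ha)) hs ht hst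

/-- If `J ⊆ (0, +∞)` is an interval, `w` is differentiable at every
point of `J`, `w a < 0` on `J`, and the stability condition holds at every point
of `J`, then `w` is strictly increasing on `J`. -/
theorem stmt_12 (J : Set ℝ) (hJ : J ⊆ Set.Ioi (0 : ℝ)) (hJint : J.OrdConnected)
    (w : ℝ → ℝ)
    (hdiff : ∀ a ∈ J, DifferentiableAt ℝ w a)
    (hneg : ∀ a ∈ J, w a < 0)
    (hstab : ∀ a ∈ J, w a - (1 / 3) * a * deriv w a / w a ≥ 0) :
    ∀ s ∈ J, ∀ t ∈ J, s < t → w s < w t :=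
  stmt_12_general J hJ hJint w hneg hstab
end
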